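/- Vickrey's theorem (dominance part): in a second-price auction, truthful bidding is a weakly dominant strategy. Formally, for each participant i and any bid vector b̂ ∈ ℝ_+^n with b̂_i ≠ v_i, letting b̂^{i←v} denote b̂ with its i-th component replaced by v_i, we have u_i(b̂^{i←v}) ≥ u_i(b̂), where outcomes in each case are determined by a second-price auction on the respective bid vectors. -/

import Mathlib

/-! Let `m` be the highest competing bid, which bidder `i`'s own bid does not affect. Whatever
`i` bids, the payoff is `v i - m` (winning) or `0` (losing), hence at most `max (v i - m) 0`;
bidding `v i` attains the bound, since a truthful winner has `v i ≥ m` and a truthful loser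
`v i ≤ m`. -/

open Finset

/-- The maximum bid among all `n` participants. -/
noncomputable def maxB {n : ℕ} (hn : 2 ≤ n) (b : Fin n → ℝ) : ℝ :=
  (univ : Finset (Fin n)).sup' ⟨(⟨0, by omega⟩ : Fin n), mem_univ _⟩ b

/-- The maximum bid among participants other than `i`. -/
noncomputable def maxOthers {n : ℕ} (hn : 2 ≤ n) (b : Fin n → ℝ) (i : Fin n) : ℝ :=
  ((univ : Finset (Fin n)).erase i).sup'
    (by
      rw [← Finset.card_pos, Finset.card_erase_of_mem (mem_univ i), Finset.card_univ,
        Fintype.card_fin]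
      omega) b

/-- `(x, p)` is a second-price auction outcome for bids `b`: a single winner `i`
with maximal bid gets the good (`x i = 1`) and pays the maximum of the other bids;
all other participants get nothing and pay nothing. -/
def spa {n : ℕ} (hn : 2 ≤ n) (b x p : Fin n → ℝ) : Prop :=
  ∃ i : Fin n, b i = maxB hn b ∧ x i = 1 ∧ p i = maxOthers hn b i ∧
    ∀ j : Fin n, j ≠ i → x j = 0 ∧ p j = 0

section SecondPriceAuction

variable {n : ℕ} (hn : 2 ≤ n)

theorem le_maxB (b : Fin n → ℝ) (j : Fin n) : b j ≤ maxB hn b :=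
  le_sup' b (mem_univ j)

theorem le_maxOthers {b : Fin n → ℝ} {i j : Fin n} (hji : j ≠ i) : b j ≤ maxOthers hn b i :=
  le_sup' b (mem_erase.mpr ⟨hji, mem_univ j⟩)

theorem maxOthers_le_of_eq_maxB {b : Fin n → ℝ} {i : Fin n} (hi : b i = maxB hn b) :
    maxOthers hn b i ≤ b i :=
  sup'_le _ _ fun j _ => hi ▸ le_maxB hn b j

theorem le_maxOthers_of_eq_maxB {b : Fin n → ℝ} {i w : Fin n} (hwi : w ≠ i)
    (hw : b w = maxB hn b) : b i ≤ maxOthers hn b i :=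
  calc b i ≤ maxB hn b := le_maxB hn b i
    _ = b w := hw.symm
    _ ≤ maxOthers hn b i := le_maxOthers hn hwi

theorem maxOthers_update_self (b : Fin n → ℝ) (i : Fin n) (a : ℝ) :
    maxOthers hn (Function.update b i a) i = maxOthers hn b i :=
  sup'_congr _ rfl fun _ hj => Function.update_of_ne (ne_of_mem_erase hj) _ _

theorem spa_payoff {b x p : Fin n → ℝ} (h : spa hn b x p) (i : Fin n) (v : ℝ) :
    (b i = maxB hn b ∧ v * x i - p i = v - maxOthers hn b i) ∨
      ((∃ w ≠ i, b w = maxB hn b) ∧ v * x i - p i = 0) := by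
  obtain ⟨w, hw, hxw, hpw, hlosers⟩ := h
  by_cases hwi : w = i
  · subst hwi
    exact Or.inl ⟨hw, by rw [hxw, hpw, mul_one]⟩
  · obtain ⟨hxi, hpi⟩ := hlosers i (Ne.symm hwi)
    exact Or.inr ⟨⟨w, hwi, hw⟩, by rw [hxi, hpi, mul_zero, sub_zero]⟩

theorem spa_payoff_le {b x p : Fin n → ℝ} (h : spa hn b x p) (i : Fin n) (v : ℝ) :
    v * x i - p i ≤ max (v - maxOthers hn b i) 0 := by
  rcases spa_payoff hn h i v with ⟨-, hu⟩ | ⟨-, hu⟩ <;> rw [hu]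
  exacts [le_max_left _ _, le_max_right _ _]

theorem spa_payoff_of_truthful {b x p : Fin n → ℝ} (h : spa hn b x p) (i : Fin n) :
    b i * x i - p i = max (b i - maxOthers hn b i) 0 := by
  rcases spa_payoff hn h i (b i) with ⟨hi, hu⟩ | ⟨⟨w, hwi, hw⟩, hu⟩ <;> rw [hu]
  · exact (max_eq_left (sub_nonneg.mpr (maxOthers_le_of_eq_maxB hn hi))).symm
  · exact (max_eq_right (sub_nonpos.mpr (le_maxOthers_of_eq_maxB hn hwi hw))).symm

end SecondPriceAuction

theorem stmt_3_general {n : ℕ} (hn : 2 ≤ n) (v : Fin n → ℝ)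
    (i : Fin n) (bhat : Fin n → ℝ)
    (x1 p1 x2 p2 : Fin n → ℝ)
    (h1 : spa hn (Function.update bhat i (v i)) x1 p1)
    (h2 : spa hn bhat x2 p2) :
    v i * x2 i - p2 i ≤ v i * x1 i - p1 i := by
  have htruthful := spa_payoff_of_truthful hn h1 i
  rw [Function.update_self, maxOthers_update_self] at htruthful
  exact htruthful ▸ spa_payoff_le hn h2 i (v i)

/-- truthful bidding is weakly dominant. -/
theorem stmt_3 {n : ℕ} (hn : 2 ≤ n) (v : Fin n → ℝ) (hv : ∀ j, 0 ≤ v j)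
    (i : Fin n) (bhat : Fin n → ℝ) (hbhat : ∀ j, 0 ≤ bhat j)
    (hne : bhat i ≠ v i)
    (x1 p1 x2 p2 : Fin n → ℝ)
    (h1 : spa hn (Function.update bhat i (v i)) x1 p1)
    (h2 : spa hn bhat x2 p2) :
    v i * x2 i - p2 i ≤ v i * x1 i - p1 i :=
  stmt_3_general hn v i bhat x1 p1 x2 p2 h1 h2
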